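/- arXiv:2401.07394 — 2 statements merged into one kernel-verified Lean document; each statement's English description precedes it below -/
import Mathlib

section
/- Let m ≥ 1 and k be natural numbers with k ≥ m, and define the polynomial P(x) = Σ_{ℓ=0}^{m} [(−m − 1/2)_ℓ (−m)_ℓ] / [(1/2 − m)_ℓ ℓ!] · x^{2ℓ}, where (x)_ℓ denotes the rising factorial (Pochhammer symbol) (x)_ℓ = x(x+1)⋯(x+ℓ−1), (x)_0 = 1. Then ∫₀¹ x^{2k−2m} (P(x) − P(1) · x^{2m+1}) dx = (2m + 1) · m! · 2^m / (2(k + 1) · ∏_{j=0}^{m} (2k + 1 − 2j)), and this value is nonzero. -/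
/-!
Since `(-m-1/2)_ℓ / (1/2-m)_ℓ = (2m+1) / (2m+1-2ℓ)` and `(-m)_ℓ / ℓ! = (-1)^ℓ C(m,ℓ)`,
the `ℓ`-th coefficient `a_ℓ` of `P` satisfies `a_ℓ (2m+1-2ℓ) = (2m+1) (-1)^ℓ C(m,ℓ)`, and the factor `2m+1-2ℓ` cancels against
`∫₀¹ x^(2k-2m) (x^(2ℓ) - x^(2m+1)) dx = (2m+1-2ℓ) / ((y+2ℓ)(2k+2))`, where `y = 2k-2m+1`.
What remains is the partial fraction expansion
`∑ (-1)^ℓ C(m,ℓ) / (y+2ℓ) = m! 2^m / ∏_{i ≤ m} (y+2i)`, whose denominator is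
`∏_{j ≤ m} (2k+1-2j)` read backwards; since `k ≥ m` all its factors are positive.
-/

open MeasureTheory intervalIntegral

/-- The rising factorial (Pochhammer symbol) `(x)_n = x (x+1) ⋯ (x+n-1)`, `(x)_0 = 1`. -/
noncomputable def risingFactorial (x : ℝ) (n : ℕ) : ℝ := ∏ i ∈ Finset.range n, (x + i)

open Finset Polynomial

lemma risingFactorial_eq_ascPochhammer_eval (x : ℝ) (n : ℕ) :
    risingFactorial x n = (ascPochhammer ℝ n).eval x := by
  induction n with
  | zero => simp [risingFactorial]
  | succ n ih => rw [ascPochhammer_succ_eval, ← ih, risingFactorial, prod_range_succ]; rfl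

lemma risingFactorial_mul_add (x : ℝ) (n : ℕ) :
    risingFactorial x n * (x + n) = x * risingFactorial (x + 1) n := by
  simp only [risingFactorial, ← prod_range_succ (fun i : ℕ => x + i)]
  rw [prod_range_succ']
  push_cast
  simp only [add_assoc, add_comm (1 : ℝ), add_zero, mul_comm]

lemma risingFactorial_neg_natCast (m ℓ : ℕ) :
    risingFactorial (-(m : ℝ)) ℓ = (-1) ^ ℓ * ℓ.factorial * m.choose ℓ := by
  rw [risingFactorial_eq_ascPochhammer_eval, ascPochhammer_eval_neg_eq_descPochhammer,
    descPochhammer_eval_eq_descFactorial, Nat.descFactorial_eq_factorial_mul_choose]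
  push_cast
  ring

lemma risingFactorial_half_sub_natCast_ne_zero (m n : ℕ) :
    risingFactorial (1 / 2 - (m : ℝ)) n ≠ 0 := by
  refine prod_ne_zero_iff.mpr fun i _ h => ?_
  have : ((2 * i + 1 : ℕ) : ℝ) = (2 * m : ℕ) := by push_cast; linarith
  have : 2 * i + 1 = 2 * m := by exact_mod_cast this
  omega

lemma hypergeometric_coeff_mul (m ℓ : ℕ) :
    risingFactorial (-(m : ℝ) - 1 / 2) ℓ * risingFactorial (-(m : ℝ)) ℓ /
        (risingFactorial (1 / 2 - (m : ℝ)) ℓ * ℓ.factorial) * (2 * m + 1 - 2 * ℓ) =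
      (2 * m + 1) * ((-1) ^ ℓ * m.choose ℓ) := by
  have hshift := risingFactorial_mul_add (-(m : ℝ) - 1 / 2) ℓ
  rw [show -(m : ℝ) - 1 / 2 + 1 = 1 / 2 - m by ring] at hshift
  have hden : risingFactorial (1 / 2 - (m : ℝ)) ℓ * ℓ.factorial ≠ 0 :=
    mul_ne_zero (risingFactorial_half_sub_natCast_ne_zero m ℓ) (by positivity)
  rw [risingFactorial_neg_natCast, div_mul_eq_mul_div, div_eq_iff hden]
  linear_combination (-2 * (-1) ^ ℓ * (ℓ.factorial : ℝ) * m.choose ℓ) * hshift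

lemma sum_neg_one_pow_mul_choose_div {K : Type*} [Field K] (m : ℕ) (y h : K)
    (hy : ∀ i ∈ range (m + 1), y + h * i ≠ 0) :
    ∑ ℓ ∈ range (m + 1), (-1) ^ ℓ * m.choose ℓ / (y + h * ℓ) =
      m.factorial * h ^ m / ∏ i ∈ range (m + 1), (y + h * i) := by
  induction m generalizing y with
  | zero => simp
  | succ m ih =>
    have hy₀ : ∀ i ∈ range (m + 1), y + h * i ≠ 0 := fun i hi =>
      hy i (range_subset_range.mpr (by omega) hi)
    have hy₁ : ∀ i ∈ range (m + 1), y + h + h * i ≠ 0 := fun i hi => by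
      simpa [mul_add, add_assoc, add_comm h] using hy (i + 1) (by simp at hi ⊢; omega)
    have hprod : ∏ i ∈ range (m + 2), (y + h * i) =
        (∏ i ∈ range (m + 1), (y + h * i)) * (y + h * (m + 1)) := by
      rw [prod_range_succ]; push_cast; rfl
    have hprod' : ∏ i ∈ range (m + 2), (y + h * i) =
        y * ∏ i ∈ range (m + 1), (y + h + h * i) := by
      rw [prod_range_succ', mul_comm]; push_cast; simp [mul_add, add_assoc, add_comm h]
    -- Pascal's rule turns the sum at `m + 1` into a difference of the sums at `m`.
    calc ∑ ℓ ∈ range (m + 2), (-1) ^ ℓ * ((m + 1).choose ℓ : K) / (y + h * ℓ)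
        = ∑ ℓ ∈ range (m + 2), ((m + 1).choose ℓ : K) * ((-1) ^ ℓ / (y + h * ℓ)) :=
          sum_congr rfl fun _ _ => by ring
      _ = ∑ ℓ ∈ range (m + 1), (m.choose ℓ : K) * ((-1) ^ ℓ / (y + h * ℓ)) +
            ∑ ℓ ∈ range (m + 1), (m.choose ℓ : K) * ((-1) ^ (ℓ + 1) / (y + h * (ℓ + 1 : ℕ))) :=
          sum_choose_succ_mul (fun i _ => (-1 : K) ^ i / (y + h * i)) m
      _ = ∑ ℓ ∈ range (m + 1), (-1) ^ ℓ * (m.choose ℓ : K) / (y + h * ℓ) -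
            ∑ ℓ ∈ range (m + 1), (-1) ^ ℓ * (m.choose ℓ : K) / (y + h + h * ℓ) := by
          rw [sub_eq_add_neg, ← sum_neg_distrib]
          congr 1 <;> refine sum_congr rfl fun ℓ _ => ?_
          · ring
          · push_cast; ring_nf
      _ = (m + 1).factorial * h ^ (m + 1) / ∏ i ∈ range (m + 2), (y + h * i) := by
          have hA := prod_ne_zero_iff.mpr hy₀
          have hB := prod_ne_zero_iff.mpr hy₁
          rw [ih y hy₀, ih (y + h) hy₁, div_sub_div _ _ hA hB,
            div_eq_div_iff (mul_ne_zero hA hB) (prod_ne_zero_iff.mpr hy), Nat.factorial_succ]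
          push_cast
          linear_combination
            (m.factorial * h ^ m * ∏ i ∈ range (m + 1), (y + h + h * i)) * hprod -
              (m.factorial * h ^ m * ∏ i ∈ range (m + 1), (y + h * i)) * hprod'

lemma integral_pow_mul_sum_sub (n N : ℕ) (s : Finset ℕ) (c : ℕ → ℝ) (e : ℕ → ℕ) :
    ∫ x in (0 : ℝ)..1, x ^ n * (∑ ℓ ∈ s, c ℓ * x ^ e ℓ - (∑ ℓ ∈ s, c ℓ) * x ^ N) =
      ∑ ℓ ∈ s, c ℓ * (1 / (n + e ℓ + 1) - 1 / (n + N + 1)) := by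
  have hsum : ∀ x : ℝ, x ^ n * (∑ ℓ ∈ s, c ℓ * x ^ e ℓ - (∑ ℓ ∈ s, c ℓ) * x ^ N) =
      ∑ ℓ ∈ s, c ℓ * (x ^ (n + e ℓ) - x ^ (n + N)) := by
    intro x
    rw [sum_mul, ← sum_sub_distrib, mul_sum]
    exact sum_congr rfl fun ℓ _ => by ring
  simp only [hsum]
  rw [intervalIntegral.integral_finsetSum fun ℓ _ =>
    (by fun_prop : Continuous _).intervalIntegrable _ _]
  refine sum_congr rfl fun ℓ _ => ?_
  rw [intervalIntegral.integral_const_mul, integral_sub ((continuous_pow _).intervalIntegrable _ _)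
    ((continuous_pow _).intervalIntegrable _ _), integral_pow, integral_pow]
  push_cast
  norm_num

theorem integral_hypergeometric_polynomial_general (m k : ℕ) (hk : m ≤ k)
    (P : ℝ → ℝ)
    (hP : ∀ x : ℝ, P x = ∑ ℓ ∈ Finset.range (m + 1),
        (risingFactorial (-(m : ℝ) - 1/2) ℓ * risingFactorial (-(m : ℝ)) ℓ) /
            (risingFactorial (1/2 - (m : ℝ)) ℓ * (Nat.factorial ℓ : ℝ)) * x ^ (2 * ℓ)) :
    (∫ x in (0:ℝ)..1, x ^ (2 * k - 2 * m) * (P x - P 1 * x ^ (2 * m + 1))) =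
      (2 * (m : ℝ) + 1) * (Nat.factorial m : ℝ) * 2 ^ m /
        (2 * ((k : ℝ) + 1) * ∏ j ∈ Finset.range (m + 1), (2 * (k : ℝ) + 1 - 2 * (j : ℝ))) ∧
    (∫ x in (0:ℝ)..1, x ^ (2 * k - 2 * m) * (P x - P 1 * x ^ (2 * m + 1))) ≠ 0 := by
  set n := 2 * k - 2 * m with hn_def
  have hn : (n : ℝ) = 2 * k - 2 * m := by
    rw [hn_def, Nat.cast_sub (by omega)]; push_cast; ring
  have hval : (∫ x in (0:ℝ)..1, x ^ n * (P x - P 1 * x ^ (2 * m + 1))) =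
      (2 * m + 1) / (2 * k + 2) *
        (m.factorial * 2 ^ m / ∏ i ∈ range (m + 1), ((n : ℝ) + 1 + 2 * i)) := by
    simp only [hP, one_pow, mul_one]
    rw [integral_pow_mul_sum_sub,
      ← sum_neg_one_pow_mul_choose_div m _ 2 fun i _ => by positivity, mul_sum]
    refine sum_congr rfl fun ℓ _ => ?_
    have hc := hypergeometric_coeff_mul m ℓ
    generalize risingFactorial (-(m : ℝ) - 1 / 2) ℓ * risingFactorial (-(m : ℝ)) ℓ /
        (risingFactorial (1 / 2 - (m : ℝ)) ℓ * ℓ.factorial) = c at hc ⊢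
    push_cast
    have hy : (0 : ℝ) < n + 2 * ℓ + 1 := by positivity
    rw [show (n : ℝ) + (2 * m + 1) + 1 = 2 * k + 2 by rw [hn]; ring]
    field_simp
    linear_combination (n + 2 * ℓ + 1 : ℝ) * (hc - c * hn)
  have hprod : ∏ j ∈ range (m + 1), (2 * (k : ℝ) + 1 - 2 * (j : ℝ)) =
      ∏ i ∈ range (m + 1), ((n : ℝ) + 1 + 2 * i) := by
    rw [← prod_range_reflect]
    refine prod_congr rfl fun j hj => ?_
    rw [Nat.cast_sub (by simp at hj; omega), hn]
    push_cast
    ring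
  refine ⟨?_, ?_⟩ <;> rw [hval]
  · rw [hprod]
    field_simp
  · positivity

/-- For `k ≥ m`, `∫₀¹ x^(2k-2m) (P(x) - P(1) x^(2m+1)) dx
= (2m+1) m! 2^m / (2(k+1) ∏_{j=0}^m (2k+1-2j)) ≠ 0`, where `P` is the terminating
hypergeometric polynomial `₂F₁(-m, -m-1/2; 1/2-m; x²)`. -/
theorem integral_hypergeometric_polynomial (m k : ℕ) (hm : 1 ≤ m) (hk : m ≤ k)
    (P : ℝ → ℝ)
    (hP : ∀ x : ℝ, P x = ∑ ℓ ∈ Finset.range (m + 1),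
        (risingFactorial (-(m : ℝ) - 1/2) ℓ * risingFactorial (-(m : ℝ)) ℓ) /
            (risingFactorial (1/2 - (m : ℝ)) ℓ * (Nat.factorial ℓ : ℝ)) * x ^ (2 * ℓ)) :
    (∫ x in (0:ℝ)..1, x ^ (2 * k - 2 * m) * (P x - P 1 * x ^ (2 * m + 1))) =
      (2 * (m : ℝ) + 1) * (Nat.factorial m : ℝ) * 2 ^ m /
        (2 * ((k : ℝ) + 1) * ∏ j ∈ Finset.range (m + 1), (2 * (k : ℝ) + 1 - 2 * (j : ℝ))) ∧
    (∫ x in (0:ℝ)..1, x ^ (2 * k - 2 * m) * (P x - P 1 * x ^ (2 * m + 1))) ≠ 0 :=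
  integral_hypergeometric_polynomial_general m k hk P hP
end

section
/- Let m ≥ 1 be a natural number, define the polynomial P(x) = Σ_{ℓ=0}^{m} [(−m − 1/2)_ℓ (−m)_ℓ] / [(1/2 − m)_ℓ ℓ!] · x^{2ℓ}, where (x)_ℓ denotes the rising factorial (Pochhammer symbol) (x)_ℓ = x(x+1)⋯(x+ℓ−1), (x)_0 = 1, set c = −P(1), and define B : [0,1) → ℝ by B(x) = (P(x) + c · x^{2m+1}) / (1 − x²)^m. Then B(0) = 1 and for every x ∈ (0,1), (x − x³) · B''(x) − 2m · B'(x) − (4m · x/(1 − x²)) · B(x) = 0. -/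
/-!
Write `B = N / (1 - x²)^m`. Conjugating by `(1 - x²)^m` turns the Jacobi equation for `B` into
`x(1-x²)N'' + (4mx² - 2m)N' - (4m² + 2m)xN = 0`, and for `N(x) = F(x²)` this is `4x` times the
hypergeometric equation for `F` with parameters `a = -m - 1/2`, `b = -m`, `γ = 1/2 - m`.
Its polynomial solution is `₂F₁(-m, -m - 1/2; 1/2 - m; t)`, because the `₂F₁` coefficients
satisfy the recurrence `(n+1)(n+γ) c_{n+1} = (n+a)(n+b) c_n`, and `x^(2m+1) = t^(1-γ)` is the
second solution. So `N = P + c x^(2m+1)` works for every `c`, and `B(0) = P(0) = 1`.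
-/

open Polynomial Finset Filter Topology

lemma risingFactorial_succ (x : ℝ) (n : ℕ) :
    risingFactorial x (n + 1) = risingFactorial x n * (x + n) :=
  prod_range_succ _ n

lemma risingFactorial_ne_zero {x : ℝ} (hx : ∀ i : ℕ, x + i ≠ 0) (n : ℕ) :
    risingFactorial x n ≠ 0 :=
  prod_ne_zero_iff.2 fun i _ => hx i

lemma risingFactorial_neg_natCast_of_lt {m n : ℕ} (h : m < n) :
    risingFactorial (-(m : ℝ)) n = 0 :=
  prod_eq_zero (mem_range.2 h) (by ring)

noncomputable def hypergeometricCoeff (a b γ : ℝ) (n : ℕ) : ℝ :=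
  risingFactorial a n * risingFactorial b n / (risingFactorial γ n * (Nat.factorial n : ℝ))

lemma hypergeometricCoeff_succ {γ : ℝ} (hγ : ∀ i : ℕ, γ + i ≠ 0) (a b : ℝ) (n : ℕ) :
    (n + 1) * (γ + n) * hypergeometricCoeff a b γ (n + 1) =
      (a + n) * (b + n) * hypergeometricCoeff a b γ n := by
  have hγn := hγ n
  have hrf := risingFactorial_ne_zero hγ n
  simp only [hypergeometricCoeff, risingFactorial_succ, Nat.factorial_succ]
  push_cast
  field_simp

noncomputable def hypergeometricOp (a b γ : ℝ) (p : ℝ[X]) : ℝ[X] :=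
  X * (1 - X) * derivative (derivative p) + (C γ - C (a + b + 1) * X) * derivative p -
    C (a * b) * p

lemma coeff_hypergeometricOp (a b γ : ℝ) (p : ℝ[X]) (n : ℕ) :
    (hypergeometricOp a b γ p).coeff n =
      (n + 1) * (γ + n) * p.coeff (n + 1) - (a + n) * (b + n) * p.coeff n := by
  have hsplit : hypergeometricOp a b γ p = X * derivative (derivative p) -
      X * (X * derivative (derivative p)) + C γ * derivative p -
      C (a + b + 1) * (X * derivative p) - C (a * b) * p := by
    rw [hypergeometricOp]
    ring
  rw [hsplit]
  rcases n with _ | _ | n <;>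
  · simp only [coeff_add, coeff_sub, coeff_C_mul, coeff_X_mul, coeff_X_mul_zero, coeff_derivative]
    push_cast
    ring

lemma hypergeometricOp_eq_zero {a b γ : ℝ} {p : ℝ[X]}
    (hp : ∀ n : ℕ, (n + 1) * (γ + n) * p.coeff (n + 1) = (a + n) * (b + n) * p.coeff n) :
    hypergeometricOp a b γ p = 0 := by
  ext n
  rw [coeff_hypergeometricOp, hp, sub_self, coeff_zero]

/-- `₂F₁(a, -m; γ; X)`, a polynomial because `(-m)_n = 0` for `n > m`. -/
noncomputable def hypergeometricPoly (a γ : ℝ) (m : ℕ) : ℝ[X] :=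
  ∑ n ∈ range (m + 1), C (hypergeometricCoeff a (-m) γ n) * X ^ n

lemma coeff_hypergeometricPoly (a γ : ℝ) (m n : ℕ) :
    (hypergeometricPoly a γ m).coeff n = hypergeometricCoeff a (-m) γ n := by
  simp only [hypergeometricPoly, finsetSum_coeff, coeff_C_mul_X_pow, sum_ite_eq, mem_range]
  split_ifs with h
  · rfl
  · simp [hypergeometricCoeff, risingFactorial_neg_natCast_of_lt (by omega : m < n)]

lemma hypergeometricOp_hypergeometricPoly {γ : ℝ} (hγ : ∀ i : ℕ, γ + i ≠ 0) (a : ℝ)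
    (m : ℕ) :
    hypergeometricOp a (-m) γ (hypergeometricPoly a γ m) = 0 :=
  hypergeometricOp_eq_zero fun n => by
    simp only [coeff_hypergeometricPoly, hypergeometricCoeff_succ hγ]

noncomputable def jacobiRadialOp (m : ℕ) (p : ℝ[X]) : ℝ[X] :=
  X * (1 - X ^ 2) * derivative (derivative p) +
    (4 * (m : ℝ[X]) * X ^ 2 - 2 * (m : ℝ[X])) * derivative p -
    (4 * (m : ℝ[X]) ^ 2 + 2 * (m : ℝ[X])) * X * p

lemma eval_jacobiRadialOp (m : ℕ) (p : ℝ[X]) (x : ℝ) :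
    (jacobiRadialOp m p).eval x = x * (1 - x ^ 2) * (derivative (derivative p)).eval x +
      (4 * m * x ^ 2 - 2 * m) * (derivative p).eval x - (4 * m ^ 2 + 2 * m) * x * p.eval x := by
  simp [jacobiRadialOp]

lemma jacobiRadialOp_comp_X_sq (m : ℕ) (p : ℝ[X]) :
    jacobiRadialOp m (p.comp (X ^ 2)) =
      4 * X * (hypergeometricOp (-m - 1 / 2) (-m) (1 / 2 - m) p).comp (X ^ 2) := by
  refine Polynomial.funext fun x => ?_
  simp only [jacobiRadialOp, hypergeometricOp, derivative_comp, derivative_X_pow_succ,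
    derivative_mul, derivative_one, derivative_X, map_add, map_sub, map_one,
    map_mul, map_neg, map_natCast, add_comp, sub_comp, mul_comp, neg_comp, one_comp, C_comp,
    X_comp, natCast_comp, eval_sub, eval_add, eval_mul, eval_neg, eval_X, eval_one, eval_pow,
    eval_comp, eval_ofNat, eval_natCast, eval_C, Nat.cast_one, pow_one, add_zero, zero_mul, mul_one,
    zero_add, one_div, mul_neg, neg_mul, sub_neg_eq_add]
  ring

lemma jacobiRadialOp_X_pow (m : ℕ) : jacobiRadialOp m (X ^ (2 * m + 1)) = 0 := by
  rcases m with _ | m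
  · simp [jacobiRadialOp]
  · refine Polynomial.funext fun x => ?_
    simp only [jacobiRadialOp, mul_add, mul_one, derivative_X_pow_succ, Nat.cast_add, Nat.cast_mul,
      Nat.cast_ofNat, map_add, map_mul, map_natCast, map_one, derivative_mul,
      derivative_C, zero_mul, derivative_natCast, mul_zero, add_zero, derivative_one, Nat.cast_one,
      zero_add, eval_sub, eval_add, eval_mul, eval_X, eval_one, eval_pow, eval_C, eval_natCast,
      eval_ofNat, eval_zero]
    ring

lemma jacobiRadialOp_add_C_mul (m : ℕ) (p q : ℝ[X]) (c : ℝ) :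
    jacobiRadialOp m (p + C c * q) = jacobiRadialOp m p + C c * jacobiRadialOp m q := by
  simp only [jacobiRadialOp, derivative_add, derivative_C_mul]
  ring

lemma hasDerivAt_div_one_sub_sq_pow {f : ℝ → ℝ} {f' x : ℝ} (m : ℕ)
    (hf : HasDerivAt f f' x) (hx : 1 - x ^ 2 ≠ 0) :
    HasDerivAt (fun y => f y / (1 - y ^ 2) ^ m)
      ((f' + 2 * m * x / (1 - x ^ 2) * f x) / (1 - x ^ 2) ^ m) x := by
  have hu : HasDerivAt (fun y : ℝ => 1 - y ^ 2) (-(2 * x)) x := by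
    simpa using (hasDerivAt_pow 2 x).const_sub 1
  refine (hf.fun_div (hu.fun_pow m) (pow_ne_zero m hx)).congr_deriv ?_
  rcases m with _ | m
  · simp
  · simp only [Nat.add_sub_cancel]
    field_simp
    push_cast
    ring

lemma jacobi_ode_div_one_sub_sq_pow {N N' N'' B : ℝ → ℝ} (m : ℕ)
    (hN : ∀ y, HasDerivAt N (N' y) y) (hN' : ∀ y, HasDerivAt N' (N'' y) y)
    (hB : ∀ y, B y = N y / (1 - y ^ 2) ^ m) {x : ℝ} (hx : 1 - x ^ 2 ≠ 0) :
    (x - x ^ 3) * deriv (deriv B) x - 2 * m * deriv B x - 4 * m * x / (1 - x ^ 2) * B x =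
      (x * (1 - x ^ 2) * N'' x + (4 * m * x ^ 2 - 2 * m) * N' x - (4 * m ^ 2 + 2 * m) * x * N x) /
        (1 - x ^ 2) ^ m := by
  set g := fun y => N' y + 2 * m * y / (1 - y ^ 2) * N y
  have hB' : ∀ᶠ y in 𝓝 x, HasDerivAt B (g y / (1 - y ^ 2) ^ m) y := by
    have hopen : IsOpen {y : ℝ | 1 - y ^ 2 ≠ 0} :=
      isOpen_ne_fun (by fun_prop) (by fun_prop)
    filter_upwards [hopen.mem_nhds hx] with y hy
    rw [funext hB]
    exact hasDerivAt_div_one_sub_sq_pow m (hN y) hy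
  have hw : HasDerivAt (fun y : ℝ => 2 * m * y / (1 - y ^ 2))
      ((2 * m * (1 - x ^ 2) + 2 * m * x * (2 * x)) / (1 - x ^ 2) ^ 2) x := by
    refine (((hasDerivAt_id x).const_mul (2 * m : ℝ)).fun_div
      ((hasDerivAt_pow 2 x).const_sub 1) hx).congr_deriv ?_
    simp
  have hB'' := hasDerivAt_div_one_sub_sq_pow m ((hN' x).fun_add (hw.fun_mul (hN x))) hx
  have hderiv : deriv B =ᶠ[𝓝 x] fun y => g y / (1 - y ^ 2) ^ m := hB'.mono fun y hy => hy.deriv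
  rw [hderiv.deriv_eq, hB''.deriv, hB'.self_of_nhds.deriv]
  simp only [g, hB]
  field_simp
  ring

lemma one_half_sub_natCast_add_natCast_ne_zero (m i : ℕ) : 1 / 2 - (m : ℝ) + i ≠ 0 := by
  intro h
  have h2 : (2 * i + 1 : ℝ) = 2 * m := by linarith
  have hnat : 2 * i + 1 = 2 * m := by exact_mod_cast h2
  omega

theorem jacobi_ode_solution_general_general (m : ℕ)
    (P : ℝ → ℝ)
    (hP : ∀ x : ℝ, P x = ∑ ℓ ∈ Finset.range (m + 1),
        (risingFactorial (-(m : ℝ) - 1/2) ℓ * risingFactorial (-(m : ℝ)) ℓ) /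
            (risingFactorial (1/2 - (m : ℝ)) ℓ * (Nat.factorial ℓ : ℝ)) * x ^ (2 * ℓ))
    (c : ℝ)
    (B : ℝ → ℝ)
    (hB : ∀ x : ℝ, B x = (P x + c * x ^ (2 * m + 1)) / (1 - x ^ 2) ^ m) :
    B 0 = 1 ∧ ∀ x ∈ Set.Ioo (0 : ℝ) 1,
      (x - x ^ 3) * deriv (deriv B) x - 2 * (m : ℝ) * deriv B x -
        (4 * (m : ℝ) * x / (1 - x ^ 2)) * B x = 0 := by
  set F := hypergeometricPoly (-(m : ℝ) - 1 / 2) (1 / 2 - m) m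
  set N := F.comp (X ^ 2) + C c * X ^ (2 * m + 1)
  have hBN : ∀ x, B x = N.eval x / (1 - x ^ 2) ^ m := fun x => by
    simp [hB, hP, N, F, hypergeometricPoly, eval_finsetSum, pow_mul, hypergeometricCoeff]
  have hN : jacobiRadialOp m N = 0 := by
    rw [jacobiRadialOp_add_C_mul, jacobiRadialOp_comp_X_sq, jacobiRadialOp_X_pow,
      hypergeometricOp_hypergeometricPoly (one_half_sub_natCast_add_natCast_ne_zero m)]
    simp
  refine ⟨?_, fun x hx => ?_⟩
  · simp [hBN, N, F, ← coeff_zero_eq_eval_zero, coeff_hypergeometricPoly, hypergeometricCoeff,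
      risingFactorial]
  · have hx' : 1 - x ^ 2 ≠ 0 := by nlinarith [hx.1, hx.2]
    rw [jacobi_ode_div_one_sub_sq_pow m N.hasDerivAt (derivative N).hasDerivAt hBN hx',
      ← eval_jacobiRadialOp, hN]
    simp

/-- The radial part `B = (P(x) + c x^(2m+1))/(1-x²)^m` of the explicit Jacobi field on the
geodesic hemisphere `HS^(2m) ⊂ ℍ^(2m+1)` satisfies `B(0) = 1` and solves
`(x - x³) B'' - 2m B' - (4m x/(1-x²)) B = 0` on `(0,1)`, where
`P(x) = ₂F₁(-m, -m-1/2; 1/2-m; x²)` and `c = -P(1)`. -/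
theorem jacobi_ode_solution_general (m : ℕ) (hm : 1 ≤ m)
    (P : ℝ → ℝ)
    (hP : ∀ x : ℝ, P x = ∑ ℓ ∈ Finset.range (m + 1),
        (risingFactorial (-(m : ℝ) - 1/2) ℓ * risingFactorial (-(m : ℝ)) ℓ) /
            (risingFactorial (1/2 - (m : ℝ)) ℓ * (Nat.factorial ℓ : ℝ)) * x ^ (2 * ℓ))
    (c : ℝ) (hc : c = -P 1)
    (B : ℝ → ℝ)
    (hB : ∀ x : ℝ, B x = (P x + c * x ^ (2 * m + 1)) / (1 - x ^ 2) ^ m) :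
    B 0 = 1 ∧ ∀ x ∈ Set.Ioo (0 : ℝ) 1,
      (x - x ^ 3) * deriv (deriv B) x - 2 * (m : ℝ) * deriv B x -
        (4 * (m : ℝ) * x / (1 - x ^ 2)) * B x = 0 :=
  jacobi_ode_solution_general_general m P hP c B hB
end
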